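/- arXiv:1807.02703 — 6 statements merged into one kernel-verified Lean document; each statement's English description precedes it below -/
import Mathlib

section
/- For a prime p, the vertex connectivity of the zero divisor graph Γ[Z_{p^3}] equals p - 1. -/
/-- The nonzero zero divisors of `ZMod n`. -/
def ZeroDivisors (n : ℕ) : Set (ZMod n) :=
  {x | x ≠ 0 ∧ ∃ y : ZMod n, y ≠ 0 ∧ x * y = 0}

/-- The zero divisor graph of `ZMod n`: vertices are nonzero zero divisors,
distinct vertices adjacent iff their product is zero. -/
def zdGraph (n : ℕ) : SimpleGraph (ZeroDivisors n) where
  Adj u v := u ≠ v ∧ (u : ZMod n) * (v : ZMod n) = 0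
  symm := ⟨fun u v h => ⟨h.1.symm, by rw [mul_comm]; exact h.2⟩⟩
  loopless := ⟨fun u h => h.1 rfl⟩

/-- Vertex connectivity: smallest number of vertices whose deletion leaves a
disconnected graph or a single vertex. -/
noncomputable def vConn {V : Type*} (G : SimpleGraph V) : ℕ :=
  sInf { k | ∃ S : Set V, S.Finite ∧ S.ncard = k ∧
    (¬ (G.induce Sᶜ).Preconnected ∨ ∃ v : V, Sᶜ = {v}) }

/-- Edge connectivity: smallest number of edges whose deletion leaves a
disconnected graph or a graph with no edges. -/
noncomputable def eConn {V : Type*} (G : SimpleGraph V) : ℕ :=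
  sInf { k | ∃ E : Set (Sym2 V), E ⊆ G.edgeSet ∧ E.Finite ∧ E.ncard = k ∧
    (¬ (G.deleteEdges E).Preconnected ∨ G.deleteEdges E = ⊥) }

/-- Minimum degree of a graph. -/
noncomputable def minDeg {V : Type*} (G : SimpleGraph V) : ℕ :=
  sInf { k | ∃ v : V, (G.neighborSet v).ncard = k }

/-!
The nonzero zero divisors of `ℤ/p³` are the nonzero multiples of `p`. The `p - 1` of them that
are divisible by `p²` are adjacent to every other vertex, while those of `p`-adic valuation exactly
one are pairwise non-adjacent, as `1 + 1 < 3`. So the graph is a complete split graph: deleting the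
`p - 1` universal vertices leaves an edgeless graph on at least two vertices, and any smaller
deletion spares a universal vertex, which keeps the rest connected.
-/

section Connectivity

variable {V : Type*} (G : SimpleGraph V)

lemma vConn_le_ncard {S : Set V} (hS : S.Finite) (h : ¬ (G.induce Sᶜ).Preconnected) :
    vConn G ≤ S.ncard :=
  Nat.sInf_le ⟨S, hS, rfl, Or.inl h⟩

lemma induce_compl_preconnected_of_forall_adj {S : Set V} {a : V} (ha : a ∉ S)
    (hadj : ∀ v, v ≠ a → G.Adj a v) : (G.induce Sᶜ).Preconnected := by
  have hreach : ∀ x : ↥Sᶜ, (G.induce Sᶜ).Reachable x ⟨a, ha⟩ := by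
    intro x
    by_cases hxa : (x : V) = a
    · rw [show x = ⟨a, ha⟩ from Subtype.ext hxa]
    · exact SimpleGraph.Adj.reachable (hadj x hxa).symm
  exact fun x y => (hreach x).trans (hreach y).symm

theorem vConn_eq_ncard_of_universal_of_independent (T : Set V) (hT : T.Finite)
    (huniv : ∀ a ∈ T, ∀ v, v ≠ a → G.Adj a v) (hindep : ∀ u v, u ∉ T → v ∉ T → ¬ G.Adj u v)
    {u w : V} (hu : u ∉ T) (hw : w ∉ T) (huw : u ≠ w) :
    vConn G = T.ncard := by
  have hsep : ¬ (G.induce Tᶜ).Preconnected := by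
    have hbot : G.induce Tᶜ = ⊥ := by
      ext x y
      simpa using hindep x y x.2 y.2
    intro h
    have := h ⟨u, hu⟩ ⟨w, hw⟩
    rw [hbot, SimpleGraph.reachable_bot] at this
    exact huw (congrArg Subtype.val this)
  refine le_antisymm (vConn_le_ncard G hT hsep) (le_csInf ⟨_, T, hT, rfl, Or.inl hsep⟩ ?_)
  rintro _ ⟨S, hS, rfl, hcut⟩
  by_contra! hlt
  obtain ⟨a, haT, haS⟩ : ∃ a ∈ T, a ∉ S :=
    Set.not_subset.mp fun h => (Set.ncard_le_ncard h hS).not_gt hlt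
  obtain ⟨b, -, hb⟩ : ∃ b ∈ insert u T, b ∉ insert a S := by
    refine Set.not_subset.mp fun h => ?_
    have := (Set.ncard_le_ncard h (hS.insert a)).trans (Set.ncard_insert_le a S)
    rw [Set.ncard_insert_of_notMem hu hT] at this
    omega
  rw [Set.mem_insert_iff, not_or] at hb
  rcases hcut with hdisc | ⟨v, hv⟩
  · exact hdisc (induce_compl_preconnected_of_forall_adj G haS (huniv a haT))
  · have ha : a ∈ Sᶜ := haS
    have hb' : b ∈ Sᶜ := hb.2
    rw [hv] at ha hb'
    exact hb.1 (hb'.trans ha.symm)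

end Connectivity

lemma ZMod.ncard_ne_zero_dvd_val {n d : ℕ} [NeZero n] (hd : d ∣ n) :
    {x : ZMod n | x ≠ 0 ∧ d ∣ x.val}.ncard = n / d - 1 := by
  have himage : ZMod.val '' {x : ZMod n | x ≠ 0 ∧ d ∣ x.val} = ↑{m ∈ Finset.Ioo 0 n | d ∣ m} := by
    ext m
    simp only [Set.mem_image, Set.mem_ofPred_eq, Finset.coe_filter, Finset.mem_Ioo]
    constructor
    · rintro ⟨x, ⟨hx, hdx⟩, rfl⟩
      exact ⟨⟨Nat.pos_of_ne_zero ((ZMod.val_ne_zero x).mpr hx), x.val_lt⟩, hdx⟩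
    · rintro ⟨⟨hm0, hmn⟩, hdm⟩
      have hval : (m : ZMod n).val = m := ZMod.val_cast_of_lt hmn
      refine ⟨m, ⟨?_, by rwa [hval]⟩, hval⟩
      rw [← ZMod.val_ne_zero, hval]
      exact hm0.ne'
  have hcard := Nat.Ioc_filter_dvd_card_eq_div n d
  rw [← Finset.Ioo_insert_right (Nat.pos_of_neZero n), Finset.filter_insert, if_pos hd,
    Finset.card_insert_of_notMem (by simp)] at hcard
  rw [← Set.ncard_image_of_injective _ (ZMod.val_injective n), himage, Set.ncard_coe_finset]
  omega

lemma ZMod.mul_eq_zero_iff_dvd_val_mul {n : ℕ} [NeZero n] (x y : ZMod n) :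
    x * y = 0 ↔ n ∣ x.val * y.val := by
  rw [← ZMod.natCast_eq_zero_iff, Nat.cast_mul, ZMod.natCast_zmod_val, ZMod.natCast_zmod_val]

lemma mem_zeroDivisors_prime_pow_iff {p k : ℕ} (hp : p.Prime) (hk : k ≠ 0) (x : ZMod (p ^ k)) :
    x ∈ ZeroDivisors (p ^ k) ↔ x ≠ 0 ∧ p ∣ x.val := by
  have : NeZero (p ^ k) := ⟨pow_ne_zero k hp.ne_zero⟩
  constructor
  · rintro ⟨hx, y, hy, hxy⟩
    refine ⟨hx, by_contra fun hpx => hy ?_⟩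
    have hunit : IsUnit x := by
      rw [← ZMod.natCast_zmod_val x, ZMod.isUnit_iff_coprime]
      exact ((hp.coprime_iff_not_dvd.mpr hpx).pow_left k).symm
    exact hunit.mul_right_eq_zero.mp hxy
  · rintro ⟨hx, m, hm⟩
    refine ⟨hx, (p ^ (k - 1) : ℕ), ?_, ?_⟩
    · rw [Ne, ZMod.natCast_eq_zero_iff, Nat.pow_dvd_pow_iff_le_right hp.one_lt]
      omega
    · rw [← ZMod.natCast_zmod_val x, hm, ← Nat.cast_mul, ZMod.natCast_eq_zero_iff,
        mul_right_comm, ← pow_succ', Nat.sub_add_cancel (Nat.one_le_iff_ne_zero.mpr hk)]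
      exact dvd_mul_right _ _

section Cube

variable {p : ℕ}

lemma zdGraph_adj_of_sq_dvd_val (hp : p.Prime) {a v : ZeroDivisors (p ^ 3)}
    (ha : p ^ 2 ∣ (a : ZMod (p ^ 3)).val) (hva : v ≠ a) : (zdGraph (p ^ 3)).Adj a v := by
  have : NeZero (p ^ 3) := ⟨pow_ne_zero 3 hp.ne_zero⟩
  have hv := ((mem_zeroDivisors_prime_pow_iff hp three_ne_zero _).mp v.2).2
  refine ⟨hva.symm, (ZMod.mul_eq_zero_iff_dvd_val_mul _ _).mpr ?_⟩
  exact (dvd_of_eq (pow_succ p 2)).trans (mul_dvd_mul ha hv)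

lemma zdGraph_not_adj_of_not_sq_dvd_val (hp : p.Prime) {u w : ZeroDivisors (p ^ 3)}
    (hu : ¬ p ^ 2 ∣ (u : ZMod (p ^ 3)).val) (hw : ¬ p ^ 2 ∣ (w : ZMod (p ^ 3)).val) :
    ¬ (zdGraph (p ^ 3)).Adj u w := by
  have : NeZero (p ^ 3) := ⟨pow_ne_zero 3 hp.ne_zero⟩
  rintro ⟨-, huw⟩
  obtain ⟨a, ha⟩ := ((mem_zeroDivisors_prime_pow_iff hp three_ne_zero _).mp u.2).2
  obtain ⟨b, hb⟩ := ((mem_zeroDivisors_prime_pow_iff hp three_ne_zero _).mp w.2).2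
  rw [ZMod.mul_eq_zero_iff_dvd_val_mul, ha, hb,
    show p * a * (p * b) = p ^ 2 * (a * b) by ring, pow_succ,
    Nat.mul_dvd_mul_iff_left (pow_pos hp.pos 2)] at huw
  rw [ha, pow_two, Nat.mul_dvd_mul_iff_left hp.pos] at hu
  rw [hb, pow_two, Nat.mul_dvd_mul_iff_left hp.pos] at hw
  exact (hp.dvd_mul.mp huw).elim hu hw

lemma ncard_zeroDivisors_sq_dvd_val (hp : p.Prime) :
    {v : ZeroDivisors (p ^ 3) | p ^ 2 ∣ (v : ZMod (p ^ 3)).val}.ncard = p - 1 := by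
  have : NeZero (p ^ 3) := ⟨pow_ne_zero 3 hp.ne_zero⟩
  have himage : Subtype.val '' {v : ZeroDivisors (p ^ 3) | p ^ 2 ∣ (v : ZMod (p ^ 3)).val} =
      {x : ZMod (p ^ 3) | x ≠ 0 ∧ p ^ 2 ∣ x.val} := by
    ext x
    simp only [Set.mem_image, Set.mem_ofPred_eq, Subtype.exists, exists_and_right,
      exists_eq_right, mem_zeroDivisors_prime_pow_iff hp three_ne_zero]
    exact ⟨fun ⟨⟨hx, _⟩, h⟩ => ⟨hx, h⟩,
      fun ⟨hx, h⟩ => ⟨⟨hx, (dvd_pow_self p two_ne_zero).trans h⟩, h⟩⟩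
  rw [← Set.ncard_image_of_injective _ Subtype.val_injective, himage,
    ZMod.ncard_ne_zero_dvd_val (pow_dvd_pow p (by norm_num)),
    Nat.pow_div (by norm_num) hp.pos, pow_one]

lemma exists_zeroDivisors_val_eq (hp : p.Prime) {m : ℕ} (hm0 : m ≠ 0) (hpm : p ∣ m)
    (hm : m < p ^ 3) : ∃ v : ZeroDivisors (p ^ 3), (v : ZMod (p ^ 3)).val = m := by
  have hval : ((m : ℕ) : ZMod (p ^ 3)).val = m := ZMod.val_cast_of_lt hm
  refine ⟨⟨m, (mem_zeroDivisors_prime_pow_iff hp three_ne_zero _).mpr ⟨?_, by rwa [hval]⟩⟩, hval⟩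
  rw [← ZMod.val_ne_zero, hval]
  exact hm0

end Cube

/-- κ(Γ[Z_{p³}]) = p - 1. -/
theorem stmt2 (p : ℕ) (hp : p.Prime) :
    vConn (zdGraph (p ^ 3)) = p - 1 := by
  have : NeZero (p ^ 3) := ⟨pow_ne_zero 3 hp.ne_zero⟩
  have hp_lt_sq : p < p ^ 2 := lt_self_pow₀ hp.one_lt one_lt_two
  have hsq_lt_cube : p ^ 2 < p ^ 3 := pow_lt_pow_right₀ hp.one_lt (by norm_num)
  have hsq_not_dvd : ¬ p ^ 2 ∣ p := Nat.not_dvd_of_pos_of_lt hp.pos hp_lt_sq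
  -- `p` and `p + p²` are two vertices of valuation one
  obtain ⟨u, hu⟩ := exists_zeroDivisors_val_eq hp hp.ne_zero dvd_rfl (hp_lt_sq.trans hsq_lt_cube)
  obtain ⟨w, hw⟩ := exists_zeroDivisors_val_eq hp (m := p + p ^ 2) (by omega)
    (dvd_add dvd_rfl (dvd_pow_self p two_ne_zero)) (by nlinarith [pow_succ p 2, hp.two_le])
  rw [← ncard_zeroDivisors_sq_dvd_val hp]
  refine vConn_eq_ncard_of_universal_of_independent _ _ (Set.toFinite _)
    (fun a ha v hva => zdGraph_adj_of_sq_dvd_val hp ha hva)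
    (fun u w hu hw => zdGraph_not_adj_of_not_sq_dvd_val hp hu hw) (u := u) (w := w) ?_ ?_ ?_
  · simpa [hu] using hsq_not_dvd
  · simpa [hw, Nat.dvd_add_left (dvd_refl (p ^ 2))] using hsq_not_dvd
  · rintro rfl
    omega
end

section
/- For a prime p and integer n ≥ 3, the vertex connectivity of the zero divisor graph Γ[Z_{p^n}] equals p - 1. -/
/-!
Every zero divisor of `ZMod (p ^ n)` is a multiple of `p`, so each of the `p - 1` nonzero
elements `a` with `p * a = 0` (the nonzero multiples of `p ^ (n - 1)`) is adjacent to every other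
vertex. Deleting fewer than `p - 1` vertices therefore leaves one of these universal vertices and
hence a connected graph with at least two vertices. Deleting all of them isolates the vertex `p`,
whose neighbours are exactly the elements killed by `p`, while `p + p ^ (n - 1)` survives.
-/

namespace SimpleGraph

variable {V : Type*} {G : SimpleGraph V}

lemma preconnected_induce_of_forall_adj {s : Set V} {a : V} (ha : a ∈ s)
    (hadj : ∀ x ∈ s, x ≠ a → G.Adj x a) : (G.induce s).Preconnected := by
  have hreach : ∀ x : s, (G.induce s).Reachable x ⟨a, ha⟩ := by
    rintro ⟨x, hx⟩
    by_cases hxa : x = a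
    · subst hxa
      rfl
    · exact Adj.reachable (hadj x hx hxa)
  exact fun x y => (hreach x).trans (hreach y).symm

lemma not_preconnected_induce_of_isolated {s : Set V} {u w : V} (hu : u ∈ s) (hw : w ∈ s)
    (huw : u ≠ w) (hiso : ∀ x ∈ s, ¬ G.Adj u x) : ¬ (G.induce s).Preconnected := by
  intro hconn
  obtain ⟨walk⟩ := hconn ⟨u, hu⟩ ⟨w, hw⟩
  have hnil : ¬ walk.Nil := Walk.not_nil_of_ne fun h => huw (congrArg Subtype.val h)
  exact hiso _ walk.snd.2 (Walk.adj_snd hnil)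

lemma vConn_eq_ncard_of_universal {A : Set V} {u w : V} (hA : A.Finite)
    (huniv : ∀ a ∈ A, ∀ x, x ≠ a → G.Adj x a) (hu : u ∉ A) (hw : w ∉ A) (huw : u ≠ w)
    (hnbr : ∀ x, G.Adj u x → x ∈ A) : vConn G = A.ncard := by
  refine IsLeast.csInf_eq ⟨⟨A, hA, rfl, Or.inl ?_⟩, ?_⟩
  · exact not_preconnected_induce_of_isolated hu hw huw fun x hx hux => hx (hnbr x hux)
  rintro k ⟨S, hS, rfl, hcut⟩
  by_contra! hlt
  rcases hcut with hdisc | ⟨v, hv⟩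
  · obtain ⟨a, haA, haS⟩ := Set.exists_mem_notMem_of_ncard_lt_ncard hlt hS
    exact hdisc (preconnected_induce_of_forall_adj haS fun x _ hxa => huniv a haA x hxa)
  · have hsub : insert u A ⊆ insert v S := fun x _ =>
      or_iff_not_imp_right.2 fun hx => (hv ▸ hx : x ∈ ({v} : Set V))
    have hle := Set.ncard_le_ncard hsub (hS.insert v)
    rw [Set.ncard_insert_of_notMem hu hA] at hle
    have hinsert := Set.ncard_insert_le v S
    omega

end SimpleGraph

namespace ZMod

variable {p n : ℕ}

lemma natCast_pow_eq_zero_iff (hp : p.Prime) {k : ℕ} : (p : ZMod (p ^ n)) ^ k = 0 ↔ n ≤ k := by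
  rw [← Nat.cast_pow, natCast_eq_zero_iff, Nat.pow_dvd_pow_iff_le_right hp.one_lt]

lemma natCast_dvd_of_not_isUnit (hp : p.Prime) (hn : 0 < n) {x : ZMod (p ^ n)}
    (hx : ¬ IsUnit x) : (p : ZMod (p ^ n)) ∣ x := by
  have : NeZero (p ^ n) := ⟨pow_ne_zero n hp.ne_zero⟩
  have hunit := isUnit_natCast_iff_not_dvd_pow (a := x.val) hp hn
  rw [natCast_zmod_val] at hunit
  obtain ⟨c, hc⟩ := not_not.1 (mt hunit.2 hx)
  exact ⟨c, by rw [← natCast_zmod_val x, hc, Nat.cast_mul]⟩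

lemma ncard_setOf_mul_eq_zero {m a b : ℕ} (hm : m = a * b) (ha : 0 < a) (hb : 0 < b) :
    {x : ZMod m | (a : ZMod m) * x = 0}.ncard = a := by
  subst hm
  have : NeZero (a * b) := ⟨(Nat.mul_pos ha hb).ne'⟩
  have hval : ∀ j < a, ((b * j : ℕ) : ZMod (a * b)).val = b * j := fun j hj =>
    val_cast_of_lt (by rw [mul_comm a]; exact Nat.mul_lt_mul_of_pos_left hj hb)
  have himage : {x : ZMod (a * b) | (a : ZMod (a * b)) * x = 0} =
      (fun j : ℕ => ((b * j : ℕ) : ZMod (a * b))) '' Set.Iio a := by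
    ext x
    simp only [Set.mem_ofPred_eq, Set.mem_image, Set.mem_Iio]
    constructor
    · intro hx
      have hdvd : a * b ∣ a * x.val := by
        rwa [← natCast_eq_zero_iff, Nat.cast_mul, natCast_zmod_val]
      obtain ⟨j, hj⟩ := Nat.dvd_of_mul_dvd_mul_left ha hdvd
      refine ⟨j, ?_, by rw [← hj, natCast_zmod_val]⟩
      have hlt := x.val_lt
      rw [hj, mul_comm a] at hlt
      exact Nat.lt_of_mul_lt_mul_left hlt
    · rintro ⟨j, -, rfl⟩
      rw [← Nat.cast_mul, natCast_eq_zero_iff, ← mul_assoc]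
      exact dvd_mul_right _ _
  rw [himage, Set.InjOn.ncard_image, Set.ncard_Iio_nat]
  intro i hi j hj hij
  have hvals := congrArg val hij
  rw [hval i hi, hval j hj] at hvals
  exact Nat.eq_of_mul_eq_mul_left hb hvals

end ZMod

section PrimePower

variable {p n : ℕ}

lemma mem_zeroDivisors_pow_iff (hp : p.Prime) (hn : 0 < n) {x : ZMod (p ^ n)} :
    x ∈ ZeroDivisors (p ^ n) ↔ x ≠ 0 ∧ (p : ZMod (p ^ n)) ∣ x := by
  refine and_congr_right fun _ => ⟨?_, ?_⟩
  · rintro ⟨y, hy0, hxy⟩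
    exact ZMod.natCast_dvd_of_not_isUnit hp hn fun hx => hy0 (hx.mul_right_eq_zero.mp hxy)
  · rintro ⟨c, rfl⟩
    refine ⟨(p : ZMod (p ^ n)) ^ (n - 1), by rw [Ne, ZMod.natCast_pow_eq_zero_iff hp]; omega, ?_⟩
    calc (p : ZMod (p ^ n)) * c * p ^ (n - 1) = c * p ^ (n - 1 + 1) := by ring
      _ = 0 := by rw [Nat.sub_add_cancel hn, (ZMod.natCast_pow_eq_zero_iff hp).2 le_rfl, mul_zero]

lemma zdGraph_adj_of_mul_eq_zero (hp : p.Prime) (hn : 0 < n) {a x : ZeroDivisors (p ^ n)}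
    (ha : (p : ZMod (p ^ n)) * a = 0) (hxa : x ≠ a) : (zdGraph (p ^ n)).Adj x a := by
  obtain ⟨c, hc⟩ := ((mem_zeroDivisors_pow_iff hp hn).1 x.2).2
  refine ⟨hxa, ?_⟩
  rw [hc, mul_right_comm, ha, zero_mul]

lemma ncard_setOf_natCast_mul_eq_zero (hp : p.Prime) (hn : 1 < n) :
    {v : ZeroDivisors (p ^ n) | (p : ZMod (p ^ n)) * v = 0}.ncard = p - 1 := by
  have hp0 : (p : ZMod (p ^ n)) ≠ 0 := by
    rw [← pow_one (p : ZMod (p ^ n)), Ne, ZMod.natCast_pow_eq_zero_iff hp]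
    omega
  have hpre : {v : ZeroDivisors (p ^ n) | (p : ZMod (p ^ n)) * v = 0} =
      Subtype.val ⁻¹' ({x | (p : ZMod (p ^ n)) * x = 0} \ {0}) := by
    ext v
    simp [v.2.1]
  have hrange : {x | (p : ZMod (p ^ n)) * x = 0} \ {0} ⊆
      Set.range (Subtype.val : ZeroDivisors (p ^ n) → ZMod (p ^ n)) :=
    fun x hx => ⟨⟨x, hx.2, p, hp0, by rw [mul_comm]; exact hx.1⟩, rfl⟩
  rw [hpre, Set.ncard_preimage_of_injective_subset_range Subtype.val_injective hrange,
    Set.ncard_sdiff_singleton_of_mem (by simp),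
    ZMod.ncard_setOf_mul_eq_zero (by rw [← pow_succ', Nat.sub_add_cancel (show 1 ≤ n by omega)])
      hp.pos (pow_pos hp.pos _)]

end PrimePower

/-- for n ≥ 3, κ(Γ[Z_{pⁿ}]) = p - 1. -/
theorem stmt3 (p n : ℕ) (hp : p.Prime) (hn : 3 ≤ n) :
    vConn (zdGraph (p ^ n)) = p - 1 := by
  have : NeZero (p ^ n) := ⟨pow_ne_zero n hp.ne_zero⟩
  set π : ZMod (p ^ n) := (p : ZMod (p ^ n))
  have hpow (k : ℕ) : π ^ k = 0 ↔ n ≤ k := ZMod.natCast_pow_eq_zero_iff hp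
  have hvert (x : ZMod (p ^ n)) (hx : π * x ≠ 0) (hdvd : π ∣ x) : x ∈ ZeroDivisors (p ^ n) :=
    (mem_zeroDivisors_pow_iff hp (by omega)).2 ⟨right_ne_zero_of_mul hx, hdvd⟩
  have hpp : π * π ≠ 0 := by rw [← sq, Ne, hpow]; omega
  have hpw : π * (π + π ^ (n - 1)) = π * π := by
    calc π * (π + π ^ (n - 1)) = π * π + π ^ (n - 1 + 1) := by ring
      _ = π * π := by rw [Nat.sub_add_cancel (by omega), (hpow n).2 le_rfl, add_zero]
  have hw : π * (π + π ^ (n - 1)) ≠ 0 := hpw ▸ hpp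
  have hwdvd : π ∣ π + π ^ (n - 1) := dvd_add dvd_rfl (dvd_pow_self π (show n - 1 ≠ 0 by omega))
  let u : ZeroDivisors (p ^ n) := ⟨π, hvert π hpp dvd_rfl⟩
  let w : ZeroDivisors (p ^ n) := ⟨π + π ^ (n - 1), hvert _ hw hwdvd⟩
  have huw : u ≠ w := fun h => by
    have hne : π ^ (n - 1) ≠ 0 := by rw [Ne, hpow]; omega
    exact hne (by simpa [u, w] using congrArg Subtype.val h)
  have huniv (a : ZeroDivisors (p ^ n)) (ha : π * a = 0) (x : ZeroDivisors (p ^ n))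
      (hxa : x ≠ a) : (zdGraph (p ^ n)).Adj x a :=
    zdGraph_adj_of_mul_eq_zero hp (by omega) ha hxa
  rw [← ncard_setOf_natCast_mul_eq_zero (n := n) hp (by omega)]
  exact SimpleGraph.vConn_eq_ncard_of_universal (Set.toFinite _) huniv hpp hw huw
    (fun x hx => hx.2)
end

section
/- For distinct primes p and q and positive integers α, β, the vertex connectivity of the zero divisor graph Γ[Z_{p^α q^β}] equals min(p - 1, q - 1). -/
/-! With `A` and `B` the nonzero annihilators of `p` and of `q` (of sizes `p - 1` and `q - 1`),
every element of `A` kills every element of `B`, and every zero divisor is a multiple of `p` or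
of `q`, hence adjacent to all of `A` or to all of `B`. So deleting fewer than
`min (p - 1) (q - 1)` vertices leaves an edge `a — b` with `a ∈ A`, `b ∈ B` to which every
surviving vertex is attached. Conversely, for `p < q` the neighbours of the vertex `p` all lie
in `A`, so deleting `A` separates `p` from `2p`. -/

def IsSeparating {V : Type*} (G : SimpleGraph V) (S : Set V) : Prop :=
  ¬ (G.induce Sᶜ).Preconnected ∨ ∃ v : V, Sᶜ = {v}

section Separating

variable {V : Type*} {G : SimpleGraph V} {S : Set V}

theorem vConn_eq_of_isSeparating (hS : S.Finite) (hsep : IsSeparating G S)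
    (hmin : ∀ T : Set V, T.Finite → IsSeparating G T → S.ncard ≤ T.ncard) :
    vConn G = S.ncard :=
  le_antisymm (Nat.sInf_le ⟨S, hS, rfl, hsep⟩)
    (le_csInf ⟨_, S, hS, rfl, hsep⟩ fun _ ⟨T, hT, hk, hTsep⟩ => hk ▸ hmin T hT hTsep)

theorem isSeparating_of_neighborSet_subset {u w : V} (hu : u ∉ S) (hw : w ∉ S) (huw : u ≠ w)
    (hN : G.neighborSet u ⊆ S) : IsSeparating G S := by
  refine Or.inl fun hpre => ?_
  have : Nontrivial (Sᶜ : Set V) :=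
    ⟨⟨⟨u, hu⟩, ⟨w, hw⟩, fun h => huw (congrArg Subtype.val h)⟩⟩
  obtain ⟨z, hz⟩ := hpre.exists_adj_of_nontrivial ⟨u, hu⟩
  exact z.2 (hN hz)

theorem not_isSeparating_of_adj {a b : V} (hab : G.Adj a b) (ha : a ∉ S) (hb : b ∉ S)
    (h : ∀ z ∉ S, z ≠ a → z ≠ b → G.Adj z a ∨ G.Adj z b) : ¬ IsSeparating G S := by
  rintro (hdis | ⟨v, hv⟩)
  · let a' : (Sᶜ : Set V) := ⟨a, ha⟩
    let b' : (Sᶜ : Set V) := ⟨b, hb⟩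
    have hba : (G.induce Sᶜ).Adj b' a' := hab.symm
    have reach_a : ∀ z, (G.induce Sᶜ).Reachable z a' := by
      rintro ⟨z, hz⟩
      by_cases hza : z = a
      · subst hza; rfl
      by_cases hzb : z = b
      · subst hzb; exact hba.reachable
      rcases h z hz hza hzb with hza' | hzb'
      · exact (show (G.induce Sᶜ).Adj ⟨z, hz⟩ a' from hza').reachable
      · exact (show (G.induce Sᶜ).Adj ⟨z, hz⟩ b' from hzb').reachable.trans hba.reachable
    exact hdis fun x y => (reach_a x).trans (reach_a y).symm
  · have ha' : a ∈ Sᶜ := ha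
    have hb' : b ∈ Sᶜ := hb
    rw [hv] at ha' hb'
    exact G.ne_of_adj hab (ha'.trans hb'.symm)

end Separating

theorem IsCoprime.mul_eq_zero_of_mul_eq_zero {R : Type*} [CommRing R] {a b x y : R}
    (h : IsCoprime a b) (hx : a * x = 0) (hy : b * y = 0) : x * y = 0 := by
  obtain ⟨u, v, huv⟩ := h
  calc x * y = (u * a + v * b) * (x * y) := by rw [huv, one_mul]
    _ = u * y * (a * x) + v * x * (b * y) := by ring
    _ = 0 := by rw [hx, hy, mul_zero, mul_zero, add_zero]

theorem IsCoprime.eq_zero_of_mul_eq_zero {R : Type*} [CommRing R] {a b x : R}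
    (h : IsCoprime a b) (ha : a * x = 0) (hb : b * x = 0) : x = 0 := by
  obtain ⟨u, v, huv⟩ := h
  calc x = (u * a + v * b) * x := by rw [huv, one_mul]
    _ = u * (a * x) + v * (b * x) := by ring
    _ = 0 := by rw [ha, hb, mul_zero, mul_zero, add_zero]

namespace ZMod

theorem natCast_ne_zero_of_dvd_of_not_dvd {n m d : ℕ} (hd : d ∣ n) (hm : ¬ d ∣ m) :
    (m : ZMod n) ≠ 0 :=
  fun h => hm (hd.trans ((natCast_eq_zero_iff m n).1 h))

theorem natCast_div_ne_zero {n r : ℕ} [NeZero n] (hr : r ∣ n) (hr1 : 1 < r) :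
    ((n / r : ℕ) : ZMod n) ≠ 0 := by
  have hn : 0 < n := Nat.pos_of_ne_zero (NeZero.ne n)
  rw [Ne, natCast_eq_zero_iff]
  intro h
  have := Nat.le_of_dvd (Nat.div_pos (Nat.le_of_dvd hn hr) (by omega)) h
  have := Nat.div_lt_self hn hr1
  omega

theorem setOf_natCast_mul_eq_zero {n r : ℕ} [NeZero n] (hr : r ∣ n) :
    {x : ZMod n | (r : ZMod n) * x = 0} = AddSubgroup.zmultiples ((n / r : ℕ) : ZMod n) := by
  obtain ⟨m, rfl⟩ := hr
  have hr0 : 0 < r := Nat.pos_of_ne_zero (left_ne_zero_of_mul (NeZero.ne (r * m)))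
  rw [Nat.mul_div_cancel_left m hr0]
  ext x
  simp only [Set.mem_ofPred_eq, SetLike.mem_coe]
  constructor
  · intro hx
    have : r * m ∣ r * x.val := by
      rw [← natCast_eq_zero_iff, Nat.cast_mul, natCast_zmod_val, hx]
    obtain ⟨c, hc⟩ := (Nat.mul_dvd_mul_iff_left hr0).1 this
    rw [← natCast_zmod_val x, hc, Nat.mul_comm m c, Nat.cast_mul, ← nsmul_eq_mul]
    exact nsmul_mem (AddSubgroup.mem_zmultiples ((m : ℕ) : ZMod (r * m))) c
  · intro hx
    obtain ⟨k, rfl⟩ := AddSubgroup.mem_zmultiples_iff.1 hx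
    rw [mul_smul_comm, ← Nat.cast_mul, natCast_self, smul_zero]

theorem ncard_setOf_natCast_mul_eq_zero {n r : ℕ} [NeZero n] (hr : r ∣ n) :
    {x : ZMod n | (r : ZMod n) * x = 0}.ncard = r := by
  rw [setOf_natCast_mul_eq_zero hr, ← Nat.card_coe_set_eq, SetLike.coe_sort_coe,
    Nat.card_zmultiples, addOrderOf_coe _ (NeZero.ne n), Nat.gcd_eq_right (Nat.div_dvd_of_dvd hr),
    Nat.div_div_self hr (NeZero.ne n)]

theorem natCast_dvd_of_dvd_val {n d : ℕ} [NeZero n] {x : ZMod n} (h : d ∣ x.val) :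
    (d : ZMod n) ∣ x := by
  simpa using map_dvd (Nat.castRingHom (ZMod n)) h

theorem exists_mem_primeFactors_natCast_dvd_of_not_isUnit {n : ℕ} [NeZero n] {x : ZMod n}
    (hx : ¬ IsUnit x) : ∃ r ∈ n.primeFactors, (r : ZMod n) ∣ x := by
  rw [← natCast_zmod_val x, isUnit_iff_coprime] at hx
  by_contra! h
  exact hx (Nat.coprime_of_dvd fun r hr hrx hrn =>
    h r (Nat.mem_primeFactors.2 ⟨hr, hrn, NeZero.ne n⟩) (natCast_dvd_of_dvd_val hrx))

theorem mem_zeroDivisors_of_natCast_dvd {n r : ℕ} [NeZero n] (hr : r ∣ n) (hr1 : 1 < r)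
    {x : ZMod n} (hx0 : x ≠ 0) (hx : (r : ZMod n) ∣ x) : x ∈ ZeroDivisors n := by
  refine ⟨hx0, _, natCast_div_ne_zero hr hr1, ?_⟩
  obtain ⟨c, rfl⟩ := hx
  rw [mul_right_comm, ← Nat.cast_mul, Nat.mul_div_cancel' hr, natCast_self, zero_mul]

end ZMod

def annVertices (n r : ℕ) : Set (ZeroDivisors n) :=
  {v | (r : ZMod n) * v = 0}

theorem ncard_annVertices {n r : ℕ} [NeZero n] (hr : r ∣ n) (hr0 : (r : ZMod n) ≠ 0) :
    (annVertices n r).ncard = r - 1 := by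
  have himage : Subtype.val '' annVertices n r = {x : ZMod n | (r : ZMod n) * x = 0} \ {0} := by
    ext x
    constructor
    · rintro ⟨v, hv, rfl⟩
      exact ⟨hv, v.2.1⟩
    · rintro ⟨hx, hx0⟩
      exact ⟨⟨x, hx0, r, hr0, by rw [mul_comm]; exact hx⟩, hx, rfl⟩
  rw [← Set.ncard_image_of_injective _ Subtype.val_injective, himage,
    Set.ncard_sdiff_singleton_of_mem (show (0 : ZMod n) ∈ {x | (r : ZMod n) * x = 0} from
      mul_zero _), ZMod.ncard_setOf_natCast_mul_eq_zero hr]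

section TwoPrimeFactors

variable {n p q : ℕ}

theorem natCast_ne_zero_of_primeFactors_eq_pair (hn : n.primeFactors = {p, q}) (hpq : p ≠ q) :
    (p : ZMod n) ≠ 0 := by
  obtain ⟨hp, -, -⟩ := Nat.mem_primeFactors.1 (by simp [hn] : p ∈ n.primeFactors)
  obtain ⟨hq, hqn, -⟩ := Nat.mem_primeFactors.1 (by simp [hn] : q ∈ n.primeFactors)
  exact ZMod.natCast_ne_zero_of_dvd_of_not_dvd hqn
    fun h => hpq ((Nat.prime_dvd_prime_iff_eq hq hp).1 h).symm

theorem ncard_annVertices_of_primeFactors_eq_pair (hn : n.primeFactors = {p, q}) (hpq : p ≠ q) :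
    (annVertices n p).ncard = p - 1 := by
  obtain ⟨-, hpn, hn0⟩ := Nat.mem_primeFactors.1 (by simp [hn] : p ∈ n.primeFactors)
  have : NeZero n := ⟨hn0⟩
  exact ncard_annVertices hpn (natCast_ne_zero_of_primeFactors_eq_pair hn hpq)

theorem min_le_ncard_of_isSeparating (hn : n.primeFactors = {p, q}) (hpq : p ≠ q)
    {T : Set (ZeroDivisors n)} (hT : T.Finite) (hsep : IsSeparating (zdGraph n) T) :
    min (p - 1) (q - 1) ≤ T.ncard := by
  have hn' : n.primeFactors = {q, p} := by rw [hn, Finset.pair_comm]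
  obtain ⟨hp, -, hn0⟩ := Nat.mem_primeFactors.1 (by simp [hn] : p ∈ n.primeFactors)
  obtain ⟨hq, -, -⟩ := Nat.mem_primeFactors.1 (by simp [hn] : q ∈ n.primeFactors)
  have : NeZero n := ⟨hn0⟩
  have hcop : IsCoprime (p : ZMod n) q := ((Nat.coprime_primes hp hq).2 hpq).cast
  by_contra! hlt
  obtain ⟨a, ha, haT⟩ := Set.exists_mem_notMem_of_ncard_lt_ncard
    (t := annVertices n p) (by rw [ncard_annVertices_of_primeFactors_eq_pair hn hpq]; omega) hT
  obtain ⟨b, hb, hbT⟩ := Set.exists_mem_notMem_of_ncard_lt_ncard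
    (t := annVertices n q)
    (by rw [ncard_annVertices_of_primeFactors_eq_pair hn' hpq.symm]; omega) hT
  have hab : (zdGraph n).Adj a b :=
    ⟨fun h => a.2.1 (hcop.eq_zero_of_mul_eq_zero ha (by rw [h]; exact hb)),
      hcop.mul_eq_zero_of_mul_eq_zero ha hb⟩
  refine not_isSeparating_of_adj hab haT hbT (fun z _ hza hzb => ?_) hsep
  obtain ⟨-, y, hy, hzy⟩ := z.2
  obtain ⟨r, hr, hrz⟩ := ZMod.exists_mem_primeFactors_natCast_dvd_of_not_isUnit
    fun hu => hy (hu.mul_right_eq_zero.1 hzy)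
  rw [hn, Finset.mem_insert, Finset.mem_singleton] at hr
  rcases hr with rfl | rfl
  · exact Or.inl ⟨hza, zero_dvd_iff.1 (ha ▸ mul_dvd_mul_right hrz _)⟩
  · exact Or.inr ⟨hzb, zero_dvd_iff.1 (hb ▸ mul_dvd_mul_right hrz _)⟩

theorem isSeparating_annVertices (hn : n.primeFactors = {p, q}) (hpq : p < q) :
    IsSeparating (zdGraph n) (annVertices n p) := by
  obtain ⟨hp, hpn, hn0⟩ := Nat.mem_primeFactors.1 (by simp [hn] : p ∈ n.primeFactors)
  obtain ⟨hq, hqn, -⟩ := Nat.mem_primeFactors.1 (by simp [hn] : q ∈ n.primeFactors)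
  have : NeZero n := ⟨hn0⟩
  have hqp : ¬ q ∣ p := fun h => (Nat.le_of_dvd hp.pos h).not_gt hpq
  have hq2 : ¬ q ∣ 2 := fun h => (Nat.le_of_dvd two_pos h).not_gt (hp.two_le.trans_lt hpq)
  have hne : ∀ m : ℕ, ¬ q ∣ m → (m : ZMod n) ≠ 0 :=
    fun m => ZMod.natCast_ne_zero_of_dvd_of_not_dvd hqn
  let u : ZeroDivisors n :=
    ⟨p, ZMod.mem_zeroDivisors_of_natCast_dvd hpn hp.one_lt (hne p hqp) dvd_rfl⟩
  let w : ZeroDivisors n :=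
    ⟨(2 * p : ℕ), ZMod.mem_zeroDivisors_of_natCast_dvd hpn hp.one_lt
      (hne _ (by simp [hq.dvd_mul, hqp, hq2])) ⟨2, by push_cast; ring⟩⟩
  refine isSeparating_of_neighborSet_subset (u := u) (w := w) ?_ ?_ ?_ fun x hx => hx.2
  · show (p : ZMod n) * p ≠ 0
    rw [← Nat.cast_mul]
    exact hne _ (by simp [hq.dvd_mul, hqp])
  · show (p : ZMod n) * ((2 * p : ℕ) : ZMod n) ≠ 0
    rw [← Nat.cast_mul]
    exact hne _ (by simp [hq.dvd_mul, hqp, hq2])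
  · intro h
    have h2p : (p : ZMod n) = ((2 * p : ℕ) : ZMod n) := congrArg Subtype.val h
    rw [Nat.cast_mul, Nat.cast_two, two_mul] at h2p
    exact hne p hqp (left_eq_add.1 h2p)

theorem vConn_zdGraph_eq_min (hn : n.primeFactors = {p, q}) (hpq : p ≠ q) :
    vConn (zdGraph n) = min (p - 1) (q - 1) := by
  wlog hlt : p < q generalizing p q
  · rw [min_comm]
    exact this (by rw [hn, Finset.pair_comm]) hpq.symm (lt_of_le_of_ne (not_lt.1 hlt) hpq.symm)
  have : NeZero n := ⟨(Nat.mem_primeFactors.1 (by simp [hn] : p ∈ n.primeFactors)).2.2⟩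
  have hcard := ncard_annVertices_of_primeFactors_eq_pair hn hpq
  rw [min_eq_left (by omega), ← hcard]
  exact vConn_eq_of_isSeparating (Set.toFinite _) (isSeparating_annVertices hn hlt)
    fun T hT hsep => by have := min_le_ncard_of_isSeparating hn hpq hT hsep; omega

end TwoPrimeFactors

/-- κ(Γ[Z_{p^α q^β}]) = min (p-1) (q-1). -/
theorem stmt4 (p q α β : ℕ) (hp : p.Prime) (hq : q.Prime) (hpq : p ≠ q)
    (hα : 1 ≤ α) (hβ : 1 ≤ β) :
    vConn (zdGraph (p ^ α * q ^ β)) = min (p - 1) (q - 1) := by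
  refine vConn_zdGraph_eq_min ?_ hpq
  rw [Nat.primeFactors_mul (pow_ne_zero _ hp.ne_zero) (pow_ne_zero _ hq.ne_zero),
    Nat.primeFactors_prime_pow (by omega) hp, Nat.primeFactors_prime_pow (by omega) hq]
  rfl
end

section
/- For a prime p and n ≥ 3, the edge connectivity of the zero divisor graph Γ[Z_{p^n}] equals p - 1. -/
namespace SimpleGraph

variable {V : Type*} (G : SimpleGraph V)

theorem ncard_le_ncard_sdiff_of_not_reachable_deleteEdges {u v : V} {E : Set (Sym2 V)}
    (hE : E.Finite) {W : Set V} (hW : W ⊆ G.commonNeighbors u v)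
    (h : ¬(G.deleteEdges E).Reachable u v) : W.ncard ≤ (E \ {s(u, v)}).ncard := by
  classical
  have hblocked : ∀ w ∈ W, s(u, w) ∈ E ∨ s(w, v) ∈ E := fun w hw => by
    by_contra! hfree
    obtain ⟨huw, hvw⟩ := G.mem_commonNeighbors.1 (hW hw)
    exact h ((deleteEdges_adj.2 ⟨huw, hfree.1⟩).reachable.trans
      (deleteEdges_adj.2 ⟨hvw.symm, hfree.2⟩).reachable)
  -- The chosen blocked edge contains `w` and one of `u`, `v`, hence determines `w`.
  refine Set.ncard_le_ncard_of_injOn (fun w => if s(u, w) ∈ E then s(u, w) else s(w, v))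
    (fun w hw => ?_) (fun w₁ hw₁ w₂ hw₂ heq => ?_) hE.sdiff
  · obtain ⟨huw, hvw⟩ := G.mem_commonNeighbors.1 (hW hw)
    have := G.ne_of_adj huw
    have := G.ne_of_adj hvw
    split_ifs with huwE
    · exact ⟨huwE, by grind [Sym2.eq_iff]⟩
    · exact ⟨(hblocked w hw).resolve_left huwE, by grind [Sym2.eq_iff]⟩
  · obtain ⟨hu₁, hv₁⟩ := G.mem_commonNeighbors.1 (hW hw₁)
    obtain ⟨hu₂, hv₂⟩ := G.mem_commonNeighbors.1 (hW hw₂)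
    have := G.ne_of_adj hu₁
    have := G.ne_of_adj hu₂
    have := G.ne_of_adj hv₁
    have := G.ne_of_adj hv₂
    dsimp only at heq
    split_ifs at heq <;> grind [Sym2.eq_iff]

section Finite

variable [Finite V] {A : Set V}

theorem ncard_le_ncard_neighborSet_of_isUniversal (hA : ∀ a ∈ A, G.IsUniversal a)
    (hA_ne : A ≠ Set.univ) (v : V) : A.ncard ≤ (G.neighborSet v).ncard := by
  by_cases hv : v ∈ A
  · rw [(hA v hv).neighborSet_eq, Set.ncard_compl, Set.ncard_singleton]
    have := Set.ncard_lt_card hA_ne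
    omega
  · exact Set.ncard_le_ncard fun a ha => (hA a ha (ne_of_mem_of_not_mem ha hv)).symm

theorem reachable_deleteEdges_of_isUniversal (hA : ∀ a ∈ A, G.IsUniversal a)
    (hA_ne : A ≠ Set.univ) {E : Set (Sym2 V)} (hE : E.ncard < A.ncard) {u : V} (hu : u ∈ A)
    (v : V) : (G.deleteEdges E).Reachable u v := by
  by_contra h
  have huv : u ≠ v := by rintro rfl; exact h (Reachable.refl u)
  have hadj : G.Adj u v := hA u hu huv
  have huvE : s(u, v) ∈ E := by
    by_contra huvE
    exact h (deleteEdges_adj.2 ⟨hadj, huvE⟩).reachable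
  have hcommon : G.neighborSet v \ {u} ⊆ G.commonNeighbors u v := fun w ⟨hvw, hwu⟩ =>
    G.mem_commonNeighbors.2 ⟨hA u hu (Ne.symm hwu), hvw⟩
  have hW := G.ncard_le_ncard_sdiff_of_not_reachable_deleteEdges (Set.toFinite E) hcommon h
  have hdeg := G.ncard_le_ncard_neighborSet_of_isUniversal hA hA_ne v
  rw [Set.ncard_sdiff_singleton_of_mem huvE,
    Set.ncard_sdiff_singleton_of_mem ((G.mem_neighborSet v u).2 hadj.symm)] at hW
  have : 0 < E.ncard := (Set.ncard_pos (Set.toFinite E)).2 ⟨_, huvE⟩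
  omega

theorem preconnected_deleteEdges_of_isUniversal (hA : ∀ a ∈ A, G.IsUniversal a)
    (hA_ne : A ≠ Set.univ) {E : Set (Sym2 V)} (hE : E.ncard < A.ncard) :
    (G.deleteEdges E).Preconnected := by
  intro u v
  by_cases hu : u ∈ A
  · exact G.reachable_deleteEdges_of_isUniversal hA hA_ne hE hu v
  by_cases hv : v ∈ A
  · exact (G.reachable_deleteEdges_of_isUniversal hA hA_ne hE hv u).symm
  by_contra h
  have hcommon : A ⊆ G.commonNeighbors u v := fun a ha =>
    G.mem_commonNeighbors.2 ⟨(hA a ha (ne_of_mem_of_not_mem ha hu)).symm,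
      (hA a ha (ne_of_mem_of_not_mem ha hv)).symm⟩
  have hW := G.ncard_le_ncard_sdiff_of_not_reachable_deleteEdges (Set.toFinite E) hcommon h
  have := Set.ncard_le_ncard (Set.sdiff_subset (s := E) (t := {s(u, v)}))
  omega

theorem le_eConn [Nontrivial V] {k : ℕ}
    (h : ∀ E : Set (Sym2 V), E.ncard < k → (G.deleteEdges E).Preconnected) : k ≤ eConn G := by
  obtain ⟨E, -, -, hcard, hcut⟩ := Nat.sInf_mem (s := {k | ∃ E : Set (Sym2 V), E ⊆ G.edgeSet ∧
      E.Finite ∧ E.ncard = k ∧ (¬(G.deleteEdges E).Preconnected ∨ G.deleteEdges E = ⊥)})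
    ⟨_, G.edgeSet, subset_rfl, Set.toFinite _, rfl, Or.inr (deleteEdges_eq_bot.2 subset_rfl)⟩
  by_contra! hlt
  have hpre := h E (hcard ▸ hlt)
  rcases hcut with hcut | hbot
  · exact hcut hpre
  · exact not_preconnected_bot (hbot ▸ hpre)

theorem eConn_le_ncard_neighborSet [Nontrivial V] (v : V) :
    eConn G ≤ (G.neighborSet v).ncard := by
  classical
  refine Nat.sInf_le ⟨G.incidenceSet v, G.incidenceSet_subset v, Set.toFinite _, ?_, Or.inl ?_⟩
  · exact Set.ncard_congr' (G.incidenceSetEquivNeighborSet v)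
  · intro hpre
    obtain ⟨w, hw⟩ := exists_ne v
    obtain ⟨walk⟩ := hpre v w
    cases walk with
    | nil => exact hw rfl
    | cons hadj _ => exact (deleteEdges_adj.1 hadj).2 ⟨(deleteEdges_adj.1 hadj).1, by simp⟩

theorem eConn_eq_ncard_of_isUniversal [Nontrivial V] (hA : ∀ a ∈ A, G.IsUniversal a) {x : V}
    (hx : G.neighborSet x = A) : eConn G = A.ncard := by
  have hA_ne : A ≠ Set.univ := fun h => G.notMem_neighborSet_self (hx ▸ h ▸ Set.mem_univ x)
  exact le_antisymm (hx ▸ G.eConn_le_ncard_neighborSet x)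
    (G.le_eConn fun _ hE => G.preconnected_deleteEdges_of_isUniversal hA hA_ne hE)

end Finite

end SimpleGraph

namespace ZMod

theorem natCast_mul_eq_zero_iff {m : ℕ} [NeZero m] (a : ℕ) (y : ZMod m) :
    (a : ZMod m) * y = 0 ↔ m ∣ a * y.val := by
  rw [← natCast_eq_zero_iff, Nat.cast_mul, natCast_zmod_val]

theorem mul_eq_zero_of_dvd_val {m a b : ℕ} [NeZero m] (hab : m ∣ a * b) {x y : ZMod m}
    (hx : a ∣ x.val) (hy : b ∣ y.val) : x * y = 0 := by
  rw [← x.natCast_zmod_val, natCast_mul_eq_zero_iff]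
  exact hab.trans (Nat.mul_dvd_mul hx hy)

theorem ncard_setOf_ne_zero_dvd_val {m d k : ℕ} [NeZero m] (hm : d * k = m) :
    {x : ZMod m | x ≠ 0 ∧ d ∣ x.val}.ncard = k - 1 := by
  subst hm
  have hd : 0 < d := Nat.pos_of_ne_zero (left_ne_zero_of_mul (NeZero.ne (d * k)))
  have hval : ∀ i < k, ((i * d : ℕ) : ZMod (d * k)).val = i * d := fun i hi =>
    val_cast_of_lt (by rw [mul_comm d]; exact Nat.mul_lt_mul_of_pos_right hi hd)
  have himage : {x : ZMod (d * k) | x ≠ 0 ∧ d ∣ x.val} =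
      (fun i : ℕ => ((i * d : ℕ) : ZMod (d * k))) '' Set.Ioo 0 k := by
    ext x
    constructor
    · rintro ⟨hx, c, hc⟩
      refine ⟨c, ⟨Nat.pos_of_ne_zero ?_, ?_⟩, ?_⟩
      · rintro rfl
        exact hx ((val_eq_zero x).1 hc)
      · exact Nat.lt_of_mul_lt_mul_left (hc ▸ x.val_lt)
      · show ((c * d : ℕ) : ZMod (d * k)) = x
        rw [mul_comm c d, ← hc, natCast_zmod_val]
    · rintro ⟨i, ⟨hi0, hik⟩, rfl⟩
      rw [Set.mem_ofPred_eq, ← val_ne_zero, hval i hik]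
      exact ⟨by positivity, dvd_mul_left d i⟩
  rw [himage, Set.InjOn.ncard_image, ← Finset.coe_Ioo, Set.ncard_coe_finset, Nat.card_Ioo,
    Nat.sub_zero]
  intro i hi j hj hij
  have := congrArg val hij
  rwa [hval i hi.2, hval j hj.2, Nat.mul_left_inj hd.ne'] at this

theorem natCast_pow_ne_zero_of_lt {p n k : ℕ} (hp : 1 < p) (hk : k < n) :
    (p : ZMod (p ^ n)) ^ k ≠ 0 := by
  rw [← Nat.cast_pow, Ne, natCast_eq_zero_iff, Nat.pow_dvd_pow_iff_le_right hp]
  omega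

theorem natCast_mul_eq_zero_iff_pow_pred_dvd {p n : ℕ} (hp : 0 < p) (hn : 1 ≤ n)
    (x : ZMod (p ^ n)) : (p : ZMod (p ^ n)) * x = 0 ↔ p ^ (n - 1) ∣ x.val := by
  have : NeZero (p ^ n) := ⟨(pow_pos hp n).ne'⟩
  have hdvd : ∀ k, p ^ n ∣ p * k ↔ p ^ (n - 1) ∣ k := fun k => by
    rw [← Nat.sub_add_cancel hn, pow_succ', Nat.add_sub_cancel, Nat.mul_dvd_mul_iff_left hp]
  exact (natCast_mul_eq_zero_iff _ _).trans (hdvd _)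

end ZMod

section PrimePower

variable {p n : ℕ}

theorem dvd_val_of_mem_zeroDivisors (hp : p.Prime) {x : ZMod (p ^ n)}
    (hx : x ∈ ZeroDivisors (p ^ n)) : p ∣ x.val := by
  have : NeZero (p ^ n) := ⟨pow_ne_zero n hp.ne_zero⟩
  obtain ⟨-, y, hy, hxy⟩ := hx
  by_contra hpx
  have hunit : IsUnit x := by
    rw [← x.natCast_zmod_val, ZMod.isUnit_iff_coprime]
    exact ((hp.coprime_iff_not_dvd.2 hpx).pow_left n).symm
  exact hy (hunit.mul_right_eq_zero.1 hxy)

theorem natCast_mem_zeroDivisors (hp : 1 < p) (hn : 2 ≤ n) :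
    (p : ZMod (p ^ n)) ∈ ZeroDivisors (p ^ n) := by
  refine ⟨by simpa using ZMod.natCast_pow_ne_zero_of_lt hp (k := 1) hn, p ^ (n - 1),
    ZMod.natCast_pow_ne_zero_of_lt hp (by omega), ?_⟩
  rw [← pow_succ', Nat.sub_add_cancel (by omega), ← Nat.cast_pow, ZMod.natCast_self]

/-- The nonzero elements of the socle `p^(n-1) ZMod (p^n)`. -/
def socleVerts (p n : ℕ) : Set (ZeroDivisors (p ^ n)) :=
  {x | p ^ (n - 1) ∣ (x : ZMod (p ^ n)).val}

theorem ncard_socleVerts (hp : 1 < p) (hn : 2 ≤ n) : (socleVerts p n).ncard = p - 1 := by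
  have : NeZero (p ^ n) := ⟨pow_ne_zero n (by omega)⟩
  have hsocle : socleVerts p n = Subtype.val ⁻¹' {x | x ≠ 0 ∧ p ^ (n - 1) ∣ x.val} := by
    ext x
    exact ⟨fun h => ⟨x.2.1, h⟩, And.right⟩
  rw [hsocle, Set.ncard_preimage_of_injective_subset_range Subtype.val_injective]
  · exact ZMod.ncard_setOf_ne_zero_dvd_val (by rw [← pow_succ, Nat.sub_add_cancel (by omega)])
  · refine fun x hx => ⟨⟨x, hx.1, p, (natCast_mem_zeroDivisors hp hn).1, ?_⟩, rfl⟩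
    rw [mul_comm, ZMod.natCast_mul_eq_zero_iff_pow_pred_dvd (by omega) (by omega)]
    exact hx.2

theorem isUniversal_of_mem_socleVerts (hp : p.Prime) (hn : 1 ≤ n) {a : ZeroDivisors (p ^ n)}
    (ha : a ∈ socleVerts p n) : (zdGraph (p ^ n)).IsUniversal a := fun b hab => by
  have : NeZero (p ^ n) := ⟨pow_ne_zero n hp.ne_zero⟩
  refine ⟨hab, ZMod.mul_eq_zero_of_dvd_val ?_ ha (dvd_val_of_mem_zeroDivisors hp b.2)⟩
  rw [← pow_succ, Nat.sub_add_cancel hn]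

theorem neighborSet_natCast_eq_socleVerts (hp : 1 < p) (hn : 3 ≤ n) :
    (zdGraph (p ^ n)).neighborSet ⟨p, natCast_mem_zeroDivisors hp (by omega)⟩ =
      socleVerts p n := by
  ext w
  have hsq : (p : ZMod (p ^ n)) * p ≠ 0 := by
    rw [← sq]
    exact ZMod.natCast_pow_ne_zero_of_lt hp (by omega)
  have hmul : (p : ZMod (p ^ n)) * w = 0 ↔ w ∈ socleVerts p n :=
    ZMod.natCast_mul_eq_zero_iff_pow_pred_dvd (p := p) (n := n) (by omega) (by omega) w
  rw [← hmul]
  exact ⟨And.right, fun h => ⟨fun hw => hsq (by rwa [← hw] at h), h⟩⟩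

end PrimePower

/-- for n ≥ 3, κₑ(Γ[Z_{pⁿ}]) = p - 1. -/
theorem stmt7 (p n : ℕ) (hp : p.Prime) (hn : 3 ≤ n) :
    eConn (zdGraph (p ^ n)) = p - 1 := by
  have : NeZero (p ^ n) := ⟨pow_ne_zero n hp.ne_zero⟩
  have hcard := ncard_socleVerts hp.one_lt (by omega : 2 ≤ n)
  have hnbr := neighborSet_natCast_eq_socleVerts hp.one_lt hn
  obtain ⟨a, ha⟩ : (socleVerts p n).Nonempty :=
    Set.nonempty_of_ncard_ne_zero (by have := hp.two_le; omega)
  rw [← hnbr] at ha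
  have : Nontrivial (ZeroDivisors (p ^ n)) := nontrivial_of_ne _ _ ((zdGraph _).ne_of_adj ha)
  rw [(zdGraph (p ^ n)).eConn_eq_ncard_of_isUniversal
    (fun a ha => isUniversal_of_mem_socleVerts hp (by omega) ha) hnbr, hcard]
end

section
/- Let n be composite with smallest prime factor q, and suppose Z_n has a nonzero zero divisor. Then the edge connectivity of the zero divisor graph Γ[Z_n] equals q - 1, except when n = p^2 for a prime p, in which case it equals p - 2. -/
/-!
Every vertex `x` of `Γ[Z_n]` is divisible by some prime `r ∣ n`, so it is adjacent to (or equal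
to) each vertex killed by `r`; these are the `r - 1` nonzero multiples of `n / r`. If `u` and `v`
share such a prime `r`, the paths `u - x - v` through these vertices are edge-disjoint. If they do
not, `u` and `v` have primes `r ≠ s`, every vertex killed by `r` is adjacent to every vertex
killed by `s`, and paired up these give edge-disjoint paths `u - a - b - v`. Either way there
are `q - 1` edge-disjoint `u`-`v` paths, except that only `q - 2` remain when `u` and `v` are
themselves killed by `q`; then the vertex `q` provides one more path unless `q² = 0` in `Z_n`,
i.e. `n = q²`. The vertex `q` has exactly that many neighbours (the nonzero multiples of `n / q`
other than `q`), and deleting its edges isolates it.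
-/

theorem Set.exists_mem_disjoint_of_encard_lt {ι α : Type*} {s : Set ι} (hs : s.Finite)
    {F : ι → Set α} (hF : s.PairwiseDisjoint F) {E : Set α} (hE : E.encard < s.ncard) :
    ∃ i ∈ s, Disjoint (F i) E := by
  by_contra! h
  have : ∀ i : s, ∃ e : E, (e : α) ∈ F i := fun i ↦ by
    obtain ⟨e, he, heE⟩ := Set.not_disjoint_iff.1 (h i i.2)
    exact ⟨⟨e, heE⟩, he⟩
  choose f hf using this
  have hinj : Function.Injective f := fun i j hij ↦
    Subtype.ext (hF.elim i.2 j.2 (Set.not_disjoint_iff.2 ⟨f i, hf i, hij ▸ hf j⟩))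
  have := ENat.card_le_card_of_injective hinj
  rw [ENat.card_coe_set_eq, ENat.card_coe_set_eq, ← hs.cast_ncard_eq] at this
  exact this.not_gt hE

theorem Set.exists_injective_fin_of_le_ncard {α : Type*} [Finite α] {A : Set α} {k : ℕ}
    (hk : k ≤ A.ncard) : ∃ a : Fin k → α, Function.Injective a ∧ ∀ i, a i ∈ A := by
  rw [← Nat.card_coe_set_eq] at hk
  let e : Fin k ↪ A := (Fin.castLEEmb hk).trans (Finite.equivFin A).symm.toEmbedding
  exact ⟨fun i ↦ e i, Subtype.val_injective.comp e.injective, fun i ↦ (e i).2⟩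

theorem IsCoprime.eq_zero_of_mul_eq_zero_s8 {R : Type*} [CommRing R] {r s x : R}
    (h : IsCoprime r s) (hr : r * x = 0) (hs : s * x = 0) : x = 0 := by
  obtain ⟨a, b, hab⟩ := h
  linear_combination a * hr + b * hs - x * hab

theorem mul_eq_zero_of_dvd_of_mul_eq_zero {R : Type*} [CommMonoidWithZero R] {r u x : R}
    (hu : r ∣ u) (hx : r * x = 0) : u * x = 0 := by
  obtain ⟨c, rfl⟩ := hu
  rw [mul_right_comm, hx, zero_mul]

namespace SimpleGraph

variable {V : Type*} {G : SimpleGraph V} {u v x y : V}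

theorem reachable_deleteEdges_compl {F : Set (Sym2 V)} (h : x = y ∨ G.Adj x y)
    (hF : s(x, y) ∈ F) : (G.deleteEdges Fᶜ).Reachable x y := by
  rcases h with rfl | h
  · rfl
  · exact (deleteEdges_adj.2 ⟨h, not_not.2 hF⟩).reachable

theorem isEdgeReachable_of_pairwiseDisjoint {ι : Type*} {s : Set ι} (hs : s.Finite)
    {F : ι → Set (Sym2 V)} (hF : s.PairwiseDisjoint F)
    (h : ∀ i ∈ s, (G.deleteEdges (F i)ᶜ).Reachable u v) : G.IsEdgeReachable s.ncard u v := by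
  intro E hE
  obtain ⟨i, hi, hdisj⟩ := Set.exists_mem_disjoint_of_encard_lt hs hF hE
  exact (h i hi).mono (deleteEdges_anti hdisj.symm.subset_compl_right)

theorem isEdgeReachable_ncard_diff_singleton [Finite V] {X : Set V}
    (hu : ∀ x ∈ X, u = x ∨ G.Adj u x) (hv : ∀ x ∈ X, v = x ∨ G.Adj v x) :
    G.IsEdgeReachable (X \ {v}).ncard u v := by
  refine isEdgeReachable_of_pairwiseDisjoint (F := fun x ↦ {s(u, x), s(x, v)}) (Set.toFinite _)
    ?_ fun x hx ↦ ?_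
  · rintro x ⟨-, hxv⟩ y ⟨-, hyv⟩ hxy
    simp only [Set.mem_singleton_iff] at hxv hyv
    simp only [Function.onFun, Set.disjoint_insert_left, Set.disjoint_insert_right,
      Set.disjoint_singleton, Set.mem_insert_iff, Set.mem_singleton_iff, Sym2.eq_iff, ne_eq]
    grind
  · exact (reachable_deleteEdges_compl (hu x hx.1) (by simp)).trans
      (reachable_deleteEdges_compl ((hv x hx.1).imp Eq.symm Adj.symm) (by simp))

theorem isEdgeReachable_of_forall_adj_of_injective {k : ℕ} {a b : Fin k → V}
    (ha : a.Injective) (hb : b.Injective) (hu : ∀ i, u = a i ∨ G.Adj u (a i))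
    (hab : ∀ i j, G.Adj (a i) (b j)) (hv : ∀ j, v = b j ∨ G.Adj v (b j))
    (hba : ∀ i j, a i = v → b j = u → i = j) : G.IsEdgeReachable k u v := by
  have hne : ∀ i j, a i ≠ b j := fun i j ↦ (hab i j).ne
  simpa using isEdgeReachable_of_pairwiseDisjoint (G := G) (Set.toFinite Set.univ)
    (F := fun i ↦ {s(u, a i), s(a i, b i), s(b i, v)}) (fun i _ j _ hij ↦ by
      simp only [Function.onFun, Set.disjoint_insert_left, Set.disjoint_insert_right,
        Set.disjoint_singleton, Set.mem_insert_iff, Set.mem_singleton_iff, Sym2.eq_iff, ne_eq]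
      grind [Function.Injective])
    fun i _ ↦ ((reachable_deleteEdges_compl (hu i) (by simp)).trans
      (reachable_deleteEdges_compl (.inr (hab i i)) (by simp))).trans
      (reachable_deleteEdges_compl ((hv i).imp Eq.symm Adj.symm) (by simp))

theorem isEdgeReachable_of_forall_adj_of_le_ncard [Finite V] {k : ℕ} {A B : Set V}
    (hA : k ≤ A.ncard) (hB : k ≤ B.ncard) (hu : ∀ a ∈ A, u = a ∨ G.Adj u a)
    (hAB : ∀ a ∈ A, ∀ b ∈ B, G.Adj a b) (hv : ∀ b ∈ B, v = b ∨ G.Adj v b) :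
    G.IsEdgeReachable k u v := by
  classical
  obtain ⟨a, ha, haA⟩ := Set.exists_injective_fin_of_le_ncard hA
  obtain ⟨b, hb, hbB⟩ := Set.exists_injective_fin_of_le_ncard hB
  -- If `v = a i₀` and `u = b j₀`, pair `a i₀` with `b j₀`: that path is the edge `uv` alone.
  obtain ⟨σ, hσ⟩ : ∃ σ : Equiv.Perm (Fin k), ∀ i j, a i = v → b (σ j) = u → i = j := by
    by_cases h : ∃ i₀ j₀, a i₀ = v ∧ b j₀ = u
    · obtain ⟨i₀, j₀, hi₀, hj₀⟩ := h
      refine ⟨Equiv.swap i₀ j₀, fun i j hi hj ↦ ?_⟩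
      have hj' := hb (hj.trans hj₀.symm)
      rw [Equiv.swap_apply_eq_iff, Equiv.swap_apply_right] at hj'
      rw [ha (hi.trans hi₀.symm), hj']
    · push Not at h
      exact ⟨1, fun i j hi hj ↦ (h i _ hi hj).elim⟩
  exact isEdgeReachable_of_forall_adj_of_injective ha (hb.comp σ.injective)
    (fun i ↦ hu _ (haA i)) (fun i j ↦ hAB _ (haA i) _ (hbB _)) (fun j ↦ hv _ (hbB _)) hσ

theorem eConn_eq_ncard_neighborSet [Finite V] (w : V)
    (hG : G.IsEdgeConnected (G.neighborSet w).ncard) : eConn G = (G.neighborSet w).ncard := by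
  classical
  have hmem : (G.neighborSet w).ncard ∈ {k | ∃ E : Set (Sym2 V), E ⊆ G.edgeSet ∧ E.Finite ∧
      E.ncard = k ∧ (¬ (G.deleteEdges E).Preconnected ∨ G.deleteEdges E = ⊥)} := by
    refine ⟨G.incidenceSet w, G.incidenceSet_subset w, Set.toFinite _,
      Set.ncard_congr' (G.incidenceSetEquivNeighborSet w), ?_⟩
    by_cases h : ∃ v, w ≠ v
    · obtain ⟨v, hv⟩ := h
      refine .inl fun hpre ↦ ?_
      obtain ⟨p⟩ := hpre w v
      have hadj := p.adj_snd (p.not_nil_of_ne hv)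
      rw [deleteEdges_adj] at hadj
      exact hadj.2 ⟨G.mem_edgeSet.2 hadj.1, Sym2.mem_mk_left _ _⟩
    · push Not at h
      refine .inr ?_
      ext x y
      simp [← h x, ← h y]
  refine le_antisymm (Nat.sInf_le hmem) (le_csInf ⟨_, hmem⟩ ?_)
  rintro _ ⟨E, -, hE, rfl, hdisc⟩
  by_contra! hlt
  have hpre : (G.deleteEdges E).Preconnected := fun x y ↦
    hG x y (by rw [← hE.cast_ncard_eq]; exact_mod_cast hlt)
  obtain ⟨x, hx⟩ := Set.nonempty_of_ncard_ne_zero (by omega : (G.neighborSet w).ncard ≠ 0)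
  refine G.ne_of_adj hx ?_
  rcases hdisc with h | h
  · exact absurd hpre h
  · simpa [h, reachable_bot] using hpre w x

end SimpleGraph

open SimpleGraph

theorem ZeroDivisors.one_lt {n : ℕ} (h : (ZeroDivisors n).Nonempty) : 1 < n := by
  obtain ⟨x, hx, y, hy, hxy⟩ := h
  match n, x, y with
  | 0, x, y => exact absurd (mul_eq_zero.1 hxy) (by simp [hx, hy])
  | 1, x, _ => exact absurd (Subsingleton.elim x 0) hx
  | _ + 2, _, _ => omega

theorem exists_prime_sq_iff {n : ℕ} (h1 : 1 < n) (hn : ¬ n.Prime) :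
    (∃ p, p.Prime ∧ n = p ^ 2) ↔ (n.minFac : ZMod n) * n.minFac = 0 := by
  constructor
  · rintro ⟨p, hp, rfl⟩
    rw [hp.pow_minFac two_ne_zero, ← Nat.cast_mul, ← sq, ZMod.natCast_self]
  · intro h
    rw [← Nat.cast_mul, ZMod.natCast_eq_zero_iff, ← sq] at h
    have hq := Nat.minFac_prime h1.ne'
    obtain ⟨i, hi, hni⟩ := (Nat.dvd_prime_pow hq).1 h
    refine ⟨_, hq, ?_⟩
    interval_cases i
    · simp at hni
      omega
    · exact absurd (by rwa [hni, pow_one]) hn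
    · exact hni

/-- For `r ∣ n` these are the nonzero multiples of `n / r`. -/
def annihilatorVertices (n r : ℕ) : Set (ZeroDivisors n) := {x | (r : ZMod n) * x = 0}

section

variable {n : ℕ}

theorem ZMod.natCast_ne_zero_of_lt {r : ℕ} (h0 : 0 < r) (h : r < n) : (r : ZMod n) ≠ 0 := by
  rw [Ne, ZMod.natCast_eq_zero_iff]
  exact Nat.not_dvd_of_pos_of_lt h0 h

theorem natCast_mem_zeroDivisors_s8 {r : ℕ} (hr : r ∣ n) (h1 : 1 < r) (hrn : r < n) :
    (r : ZMod n) ∈ ZeroDivisors n := by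
  refine ⟨ZMod.natCast_ne_zero_of_lt (by omega) hrn, (n / r : ℕ),
    ZMod.natCast_ne_zero_of_lt (Nat.div_pos hrn.le (by omega)) (Nat.div_lt_self (by omega) h1), ?_⟩
  rw [← Nat.cast_mul, Nat.mul_div_cancel' hr, ZMod.natCast_self]

theorem eq_or_adj_of_mul_eq_zero {u x : ZeroDivisors n} (h : (u : ZMod n) * x = 0) :
    u = x ∨ (zdGraph n).Adj u x :=
  (em (u = x)).imp_right fun hux ↦ ⟨hux, h⟩

theorem eq_or_adj_of_mem_annihilatorVertices {r : ℕ} {u x : ZeroDivisors n}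
    (hu : (r : ZMod n) ∣ u) (hx : x ∈ annihilatorVertices n r) : u = x ∨ (zdGraph n).Adj u x :=
  eq_or_adj_of_mul_eq_zero (mul_eq_zero_of_dvd_of_mul_eq_zero hu hx)

variable [NeZero n]

theorem Nat.Prime.lt_of_dvd_of_not_prime {r : ℕ} (hr : r.Prime) (hrn : r ∣ n)
    (hn : ¬ n.Prime) : r < n :=
  (Nat.le_of_dvd (NeZero.pos n) hrn).lt_of_ne fun h ↦ hn (h ▸ hr)

theorem ZMod.natCast_mul_eq_zero_iff_s8 {r : ℕ} (hr : r ∣ n) {x : ZMod n} :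
    (r : ZMod n) * x = 0 ↔ n / r ∣ x.val := by
  have hr0 : 0 < r := Nat.pos_of_dvd_of_pos hr (NeZero.pos n)
  have hx : (r : ZMod n) * x = ((r * x.val : ℕ) : ZMod n) := by simp
  rw [hx, ZMod.natCast_eq_zero_iff, ← Nat.mul_dvd_mul_iff_left hr0 (b := n / r),
    Nat.mul_div_cancel' hr]

theorem exists_prime_dvd_of_mem_zeroDivisors {x : ZMod n} (hx : x ∈ ZeroDivisors n) :
    ∃ r, r.Prime ∧ r ∣ n ∧ (r : ZMod n) ∣ x := by
  obtain ⟨-, y, hy, hxy⟩ := hx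
  have hunit : ¬ IsUnit x := fun h ↦ hy (h.mul_right_eq_zero.1 hxy)
  rw [← ZMod.natCast_zmod_val x, ZMod.isUnit_iff_coprime, Nat.Prime.not_coprime_iff_dvd] at hunit
  obtain ⟨r, hr, ⟨c, hc⟩, hrn⟩ := hunit
  exact ⟨r, hr, hrn, c, by rw [← ZMod.natCast_zmod_val x, hc, Nat.cast_mul]⟩

theorem ncard_annihilatorVertices {r : ℕ} (hr : r ∣ n) (hrn : r < n) :
    (annihilatorVertices n r).ncard = r - 1 := by
  have hr0 : 0 < r := Nat.pos_of_dvd_of_pos hr (NeZero.pos n)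
  have hm : r * (n / r) = n := Nat.mul_div_cancel' hr
  have hm0 : 0 < n / r := Nat.div_pos hrn.le hr0
  rw [show r - 1 = (Set.Ioo 0 r).ncard by simp]
  refine Set.ncard_congr (fun x _ ↦ (x : ZMod n).val / (n / r)) ?_ ?_ ?_
  · rintro x hx
    obtain ⟨t, ht⟩ := (ZMod.natCast_mul_eq_zero_iff_s8 hr).1 hx
    have hx0 : (x : ZMod n).val ≠ 0 := (ZMod.val_ne_zero _).2 x.2.1
    have hxn := ZMod.val_lt (x : ZMod n)
    simp only [ht, Nat.mul_div_cancel_left t hm0, Set.mem_Ioo] at hx0 hxn ⊢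
    constructor
    · exact Nat.pos_of_ne_zero (by rintro rfl; simp at hx0)
    · nlinarith
  · intro x y hx hy hxy
    obtain ⟨t, ht⟩ := (ZMod.natCast_mul_eq_zero_iff_s8 hr).1 hx
    obtain ⟨t', ht'⟩ := (ZMod.natCast_mul_eq_zero_iff_s8 hr).1 hy
    simp only [ht, ht', Nat.mul_div_cancel_left _ hm0] at hxy
    exact Subtype.ext (ZMod.val_injective n (by rw [ht, ht', hxy]))
  · rintro t ⟨ht0, htr⟩
    have hlt : n / r * t < n := by nlinarith
    have hval : ((n / r * t : ℕ) : ZMod n).val = n / r * t := ZMod.val_natCast_of_lt hlt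
    have hann : (r : ZMod n) * (n / r * t : ℕ) = 0 :=
      (ZMod.natCast_mul_eq_zero_iff_s8 hr).2 (by rw [hval]; exact dvd_mul_right _ _)
    refine ⟨⟨_, ZMod.natCast_ne_zero_of_lt (by positivity) hlt, r,
      ZMod.natCast_ne_zero_of_lt hr0 hrn, by rw [mul_comm, hann]⟩, hann, ?_⟩
    exact (congrArg (· / (n / r)) hval).trans (Nat.mul_div_cancel_left t hm0)

theorem ncard_neighborSet_natCast {r : ℕ} (hr : r ∣ n) (hrn : r < n)
    (hw : (r : ZMod n) ∈ ZeroDivisors n) :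
    ((zdGraph n).neighborSet ⟨r, hw⟩).ncard =
      if (r : ZMod n) * r = 0 then r - 2 else r - 1 := by
  have hN : (zdGraph n).neighborSet ⟨r, hw⟩ = annihilatorVertices n r \ {⟨r, hw⟩} := by
    ext x
    simp [zdGraph, annihilatorVertices, and_comm, eq_comm]
  have hmem : (⟨r, hw⟩ : ZeroDivisors n) ∈ annihilatorVertices n r ↔ (r : ZMod n) * r = 0 :=
    Iff.rfl
  rw [hN]
  split_ifs with h
  · rw [Set.ncard_sdiff_singleton_of_mem (hmem.2 h), ncard_annihilatorVertices hr hrn]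
    omega
  · rw [Set.sdiff_singleton_eq_self (mt hmem.1 h), ncard_annihilatorVertices hr hrn]
theorem isEdgeReachable_of_mem_annihilatorVertices {r : ℕ} (hr : r.Prime) (hrn : r ∣ n)
    (hrlt : r < n) (hsq : (r : ZMod n) * r ≠ 0) {u v : ZeroDivisors n} (hu : (r : ZMod n) ∣ u)
    (hv : (r : ZMod n) ∣ v) (huX : u ∈ annihilatorVertices n r)
    (hvX : v ∈ annihilatorVertices n r) : (zdGraph n).IsEdgeReachable (r - 1) u v := by
  set w : ZeroDivisors n := ⟨r, natCast_mem_zeroDivisors_s8 hrn hr.one_lt hrlt⟩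
  have hwX : w ∉ annihilatorVertices n r := hsq
  have hcl : ∀ y : ZeroDivisors n, (r : ZMod n) ∣ y → y ∈ annihilatorVertices n r →
      ∀ x ∈ insert w (annihilatorVertices n r), y = x ∨ (zdGraph n).Adj y x := by
    rintro y hy hyX x (rfl | hx)
    · exact eq_or_adj_of_mul_eq_zero (by rw [mul_comm]; exact hyX)
    · exact eq_or_adj_of_mem_annihilatorVertices hy hx
  refine (isEdgeReachable_ncard_diff_singleton (hcl u hu huX) (hcl v hv hvX)).anti ?_
  rw [← Set.insert_sdiff_singleton_comm (ne_of_mem_of_not_mem hvX hwX).symm,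
    Set.ncard_insert_of_notMem fun h ↦ hwX h.1, Set.ncard_sdiff_singleton_of_mem hvX,
    ncard_annihilatorVertices hrn hrlt]
  have := hr.two_le
  omega

theorem isEdgeReachable_of_prime_dvd_of_dvd (hn : ¬ n.Prime) {r : ℕ} (hr : r.Prime)
    (hrn : r ∣ n) {u v : ZeroDivisors n} (hu : (r : ZMod n) ∣ u) (hv : (r : ZMod n) ∣ v) {k : ℕ}
    (hk : k ≤ n.minFac - 1) (hsq : (n.minFac : ZMod n) * n.minFac = 0 → k ≤ n.minFac - 2) :
    (zdGraph n).IsEdgeReachable k u v := by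
  have hrlt := hr.lt_of_dvd_of_not_prime hrn hn
  have hqr : n.minFac ≤ r := Nat.minFac_le_of_dvd hr.two_le hrn
  have hX := ncard_annihilatorVertices hrn hrlt
  have hfan := isEdgeReachable_ncard_diff_singleton
    (fun x ↦ eq_or_adj_of_mem_annihilatorVertices hu)
    (fun x ↦ eq_or_adj_of_mem_annihilatorVertices hv)
  by_cases hvX : v ∉ annihilatorVertices n r
  · exact hfan.anti (by rw [Set.sdiff_singleton_eq_self hvX, hX]; omega)
  by_cases huX : u ∉ annihilatorVertices n r
  · refine (isEdgeReachable_ncard_diff_singleton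
      (fun x ↦ eq_or_adj_of_mem_annihilatorVertices hv)
      (fun x ↦ eq_or_adj_of_mem_annihilatorVertices hu)).symm.anti ?_
    rw [Set.sdiff_singleton_eq_self huX, hX]
    omega
  rw [not_not] at hvX huX
  by_cases hk' : k ≤ r - 2
  · exact hfan.anti (by rwa [Set.ncard_sdiff_singleton_of_mem hvX, hX])
  have hsq' : (n.minFac : ZMod n) * n.minFac ≠ 0 := fun h ↦ hk' (by have := hsq h; omega)
  obtain rfl : n.minFac = r := by omega
  exact (isEdgeReachable_of_mem_annihilatorVertices hr hrn hrlt hsq' hu hv huX hvX).anti hk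

theorem isEdgeReachable_of_prime_dvd_of_prime_dvd (hn : ¬ n.Prime) {r s : ℕ} (hr : r.Prime)
    (hs : s.Prime) (hrs : r ≠ s) (hrn : r ∣ n) (hsn : s ∣ n) {u v : ZeroDivisors n}
    (hu : (r : ZMod n) ∣ u) (hv : (s : ZMod n) ∣ v) :
    (zdGraph n).IsEdgeReachable (n.minFac - 1) u v := by
  have hcop : IsCoprime (r : ZMod n) s := ((Nat.coprime_primes hr hs).2 hrs).cast
  refine isEdgeReachable_of_forall_adj_of_le_ncard (A := annihilatorVertices n r)
    (B := annihilatorVertices n s) ?_ ?_ (fun x ↦ eq_or_adj_of_mem_annihilatorVertices hu) ?_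
    (fun x ↦ eq_or_adj_of_mem_annihilatorVertices hv)
  · rw [ncard_annihilatorVertices hrn (hr.lt_of_dvd_of_not_prime hrn hn)]
    have := Nat.minFac_le_of_dvd hr.two_le hrn
    omega
  · rw [ncard_annihilatorVertices hsn (hs.lt_of_dvd_of_not_prime hsn hn)]
    have := Nat.minFac_le_of_dvd hs.two_le hsn
    omega
  · intro a ha b hb
    refine ⟨fun hab ↦ a.2.1 (hcop.eq_zero_of_mul_eq_zero_s8 ha (by rw [hab]; exact hb)),
      hcop.eq_zero_of_mul_eq_zero_s8 ?_ ?_⟩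
    · rw [← mul_assoc, ha, zero_mul]
    · rw [mul_left_comm, hb, mul_zero]

theorem isEdgeConnected_zdGraph (hn : ¬ n.Prime) :
    (zdGraph n).IsEdgeConnected
      (if (n.minFac : ZMod n) * n.minFac = 0 then n.minFac - 2 else n.minFac - 1) := by
  intro u v
  obtain ⟨r, hr, hrn, hu⟩ := exists_prime_dvd_of_mem_zeroDivisors u.2
  obtain ⟨s, hs, hsn, hv⟩ := exists_prime_dvd_of_mem_zeroDivisors v.2
  by_cases hshared : ∃ p, p.Prime ∧ p ∣ n ∧ (p : ZMod n) ∣ u ∧ (p : ZMod n) ∣ v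
  · obtain ⟨p, hp, hpn, hpu, hpv⟩ := hshared
    exact isEdgeReachable_of_prime_dvd_of_dvd hn hp hpn hpu hpv (by split_ifs <;> omega)
      fun h ↦ by rw [if_pos h]
  · have hrs : r ≠ s := by
      rintro rfl
      exact hshared ⟨r, hr, hrn, hu, hv⟩
    exact (isEdgeReachable_of_prime_dvd_of_prime_dvd hn hr hs hrs hrn hsn hu hv).anti
      (by split_ifs <;> omega)

end

open Classical

/-- for composite n with a nonzero zero divisor and smallest prime factor q,
κₑ(Γ[Z_n]) = q - 1, except κₑ = q - 2 when n = p² for a prime p. -/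
theorem stmt8 (n : ℕ) (hn : ¬ n.Prime) (hne : (ZeroDivisors n).Nonempty) :
    eConn (zdGraph n) =
      (if ∃ p : ℕ, p.Prime ∧ n = p ^ 2 then n.minFac - 2 else n.minFac - 1) := by
  have h1 := ZeroDivisors.one_lt hne
  have : NeZero n := ⟨by omega⟩
  have hq := Nat.minFac_prime h1.ne'
  have hqn := Nat.minFac_dvd n
  have hqlt := hq.lt_of_dvd_of_not_prime hqn hn
  have hw := natCast_mem_zeroDivisors_s8 hqn hq.one_lt hqlt
  have hdeg := ncard_neighborSet_natCast hqn hqlt hw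
  rw [eConn_eq_ncard_neighborSet _ (hdeg ▸ isEdgeConnected_zdGraph hn), hdeg]
  exact if_congr (exists_prime_sq_iff h1 hn).symm rfl rfl
end

section
/- Let n be composite with at least one nonzero zero divisor in Z_n, and let q be the smallest prime factor of n. Then deleting the set B = {m·(n/q) : 1 ≤ m ≤ q-1} of q-1 vertices from Γ[Z_n] disconnects the graph, provided n is not q^2 (i.e., the graph is not complete). -/
/-!
Write `n = q * a` with `q = n.minFac`. In `ZMod n`, `q * z = 0` exactly when `a ∣ z.val`, so the
neighbours of the vertex `q` are exactly the nonzero multiples of `a`, which form `B`. As `n` is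
neither `q` nor `q²`, `a ∤ q`; hence `q ∉ B` is isolated once `B` is deleted, and `-q` is a second
surviving vertex (distinct from `q` because `a ≠ 2`).
-/

theorem SimpleGraph.not_preconnected_of_forall_not_adj {V : Type*} {G : SimpleGraph V} {w u : V}
    (hw : ∀ x, ¬ G.Adj w x) (hwu : w ≠ u) : ¬ G.Preconnected := fun h => by
  obtain ⟨p⟩ := h w u
  cases p with
  | nil => exact hwu rfl
  | cons hadj _ => exact hw _ hadj

theorem natCast_mem_zeroDivisors_s12 {n x y : ℕ} (hx : 0 < x) (hxn : x < n) (hy : 0 < y)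
    (hyn : y < n) (hxy : n ∣ x * y) : (x : ZMod n) ∈ ZeroDivisors n := by
  have natCast_ne_zero {k : ℕ} (hk : 0 < k) (hkn : k < n) : (k : ZMod n) ≠ 0 := fun h =>
    hk.ne' (Nat.eq_zero_of_dvd_of_lt ((ZMod.natCast_eq_zero_iff k n).1 h) hkn)
  refine ⟨natCast_ne_zero hx hxn, y, natCast_ne_zero hy hyn, ?_⟩
  rw [← Nat.cast_mul, ZMod.natCast_eq_zero_iff]
  exact hxy

theorem neg_mem_zeroDivisors {n : ℕ} {x : ZMod n} (hx : x ∈ ZeroDivisors n) :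
    -x ∈ ZeroDivisors n := by
  obtain ⟨hx0, y, hy0, hxy⟩ := hx
  exact ⟨neg_ne_zero.2 hx0, y, hy0, by rw [neg_mul, hxy, neg_zero]⟩

section Multiples

variable {q a : ℕ}

theorem val_natCast_mul_of_lt {m : ℕ} (hm : m < q) (ha : 0 < a) :
    ((m * a : ℕ) : ZMod (q * a)).val = m * a :=
  ZMod.val_natCast_of_lt (Nat.mul_lt_mul_of_pos_right hm ha)

theorem natCast_mul_eq_zero_iff_dvd_val (hq : 0 < q) (ha : 0 < a) (z : ZMod (q * a)) :
    (q : ZMod (q * a)) * z = 0 ↔ a ∣ z.val := by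
  have : NeZero (q * a) := ⟨(Nat.mul_pos hq ha).ne'⟩
  have h := ZMod.natCast_eq_zero_iff (q * z.val) (q * a)
  rw [Nat.cast_mul, ZMod.natCast_zmod_val, Nat.mul_dvd_mul_iff_left hq] at h
  exact h

/-- The set `B` of the statement, for `n = q * a`. -/
def cutSet (q a : ℕ) : Set (ZeroDivisors (q * a)) :=
  {v | ∃ m : ℕ, 1 ≤ m ∧ m ≤ q - 1 ∧ (v : ZMod (q * a)) = ((m * a : ℕ) : ZMod (q * a))}

theorem mem_cutSet_iff (hq : 0 < q) (ha : 0 < a) (v : ZeroDivisors (q * a)) :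
    v ∈ cutSet q a ↔ (q : ZMod (q * a)) * v = 0 := by
  have : NeZero (q * a) := ⟨(Nat.mul_pos hq ha).ne'⟩
  rw [natCast_mul_eq_zero_iff_dvd_val hq ha]
  constructor
  · rintro ⟨m, -, hm, hv⟩
    rw [hv, val_natCast_mul_of_lt (by omega) ha]
    exact dvd_mul_left a m
  · rintro ⟨k, hk⟩
    have hk0 : k ≠ 0 := by
      rintro rfl
      exact v.2.1 ((ZMod.val_eq_zero _).1 (by rw [hk, mul_zero]))
    have hkq : k < q := by
      have := ZMod.val_lt (v : ZMod (q * a))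
      rw [hk, mul_comm q] at this
      exact Nat.lt_of_mul_lt_mul_left this
    refine ⟨k, by omega, by omega, ?_⟩
    rw [← ZMod.natCast_zmod_val (v : ZMod (q * a)), hk, Nat.mul_comm a k]

theorem ncard_cutSet (ha : 1 < a) : (cutSet q a).ncard = q - 1 := by
  have himage : Subtype.val '' cutSet q a =
      (fun m : ℕ => ((m * a : ℕ) : ZMod (q * a))) '' Set.Icc 1 (q - 1) := by
    ext z
    constructor
    · rintro ⟨v, ⟨m, h1, h2, hv⟩, rfl⟩
      exact ⟨m, ⟨h1, h2⟩, hv.symm⟩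
    · rintro ⟨m, ⟨h1, h2⟩, rfl⟩
      have hz : ((m * a : ℕ) : ZMod (q * a)) ∈ ZeroDivisors (q * a) :=
        natCast_mem_zeroDivisors_s12 (y := q) (by positivity)
          (Nat.mul_lt_mul_of_pos_right (by omega) (by omega)) (by omega)
          (lt_mul_of_one_lt_right (by omega) ha) ⟨m, by ring⟩
      exact ⟨⟨_, hz⟩, ⟨m, h1, h2, rfl⟩, rfl⟩
  have hinj : Set.InjOn (fun m : ℕ => ((m * a : ℕ) : ZMod (q * a))) (Set.Icc 1 (q - 1)) := by
    intro m₁ hm₁ m₂ hm₂ h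
    have hval : ((m₁ * a : ℕ) : ZMod (q * a)).val = ((m₂ * a : ℕ) : ZMod (q * a)).val :=
      congrArg ZMod.val h
    rw [val_natCast_mul_of_lt (by grind) (by omega),
      val_natCast_mul_of_lt (by grind) (by omega)] at hval
    exact Nat.eq_of_mul_eq_mul_right (by omega) hval
  rw [← Set.ncard_image_of_injective _ Subtype.val_injective, himage,
    hinj.ncard_image, ← Finset.coe_Icc, Set.ncard_coe_finset, Nat.card_Icc]
  omega

theorem not_preconnected_induce_compl_cutSet (hq : 1 < q) (ha : 2 < a) (haq : ¬ a ∣ q) :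
    ¬ ((zdGraph (q * a)).induce (cutSet q a)ᶜ).Preconnected := by
  have hqa : q < q * a := lt_mul_of_one_lt_right (by omega) (by omega)
  have hw : (q : ZMod (q * a)) ∈ ZeroDivisors (q * a) :=
    natCast_mem_zeroDivisors_s12 (y := a) (by omega) hqa (by omega)
      (lt_mul_of_one_lt_left (by omega) hq) dvd_rfl
  have hqq : (q : ZMod (q * a)) * q ≠ 0 := by
    rw [ne_eq, natCast_mul_eq_zero_iff_dvd_val (by omega) (by omega), ZMod.val_natCast_of_lt hqa]
    exact haq
  have hwB : ⟨_, hw⟩ ∉ cutSet q a := by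
    rw [mem_cutSet_iff (by omega) (by omega)]
    exact hqq
  have huB : ⟨_, neg_mem_zeroDivisors hw⟩ ∉ cutSet q a := by
    rw [mem_cutSet_iff (by omega) (by omega), mul_neg, neg_eq_zero]
    exact hqq
  have hwu : (q : ZMod (q * a)) ≠ -q := by
    rw [ne_eq, eq_neg_iff_add_eq_zero, ← Nat.cast_add, ZMod.natCast_eq_zero_iff]
    exact Nat.not_dvd_of_pos_of_lt (by omega) (by nlinarith)
  refine SimpleGraph.not_preconnected_of_forall_not_adj (w := ⟨_, hwB⟩) (u := ⟨_, huB⟩) ?_ ?_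
  · rintro ⟨x, hxB⟩ ⟨-, hx⟩
    exact hxB ((mem_cutSet_iff (by omega) (by omega) x).2 hx)
  · intro h
    exact hwu (congrArg (fun v : ((cutSet q a)ᶜ : Set _) => (v.1 : ZMod (q * a))) h)

end Multiples

/-- deleting the q-1 vertices B = {m·(n/q) : 1 ≤ m ≤ q-1}, where q is the
smallest prime factor of composite n (n ≠ q²), disconnects Γ[Z_n]. -/
theorem stmt12 (n : ℕ) (hn : ¬ n.Prime) (hne : (ZeroDivisors n).Nonempty)
    (hsq : n ≠ n.minFac ^ 2) :
    (({v : ZeroDivisors n | ∃ m : ℕ, 1 ≤ m ∧ m ≤ n.minFac - 1 ∧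
        (v : ZMod n) = ((m * (n / n.minFac) : ℕ) : ZMod n)}).ncard = n.minFac - 1) ∧
    ¬ ((zdGraph n).induce
        ({v : ZeroDivisors n | ∃ m : ℕ, 1 ≤ m ∧ m ≤ n.minFac - 1 ∧
          (v : ZMod n) = ((m * (n / n.minFac) : ℕ) : ZMod n)}ᶜ)).Preconnected := by
  have hn0 : n ≠ 0 := by
    rintro rfl
    obtain ⟨x, hx0, y, hy0, hxy⟩ := hne
    exact mul_ne_zero (M₀ := ℤ) hx0 hy0 hxy
  have hq : n.minFac.Prime := Nat.minFac_prime (by rintro rfl; simp at hsq)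
  generalize hq_def : n.minFac = q at hq hsq ⊢
  obtain ⟨a, rfl⟩ : q ∣ n := hq_def ▸ Nat.minFac_dvd n
  rw [Nat.mul_div_cancel_left a hq.pos]
  have haq : ¬ a ∣ q := by
    intro h
    rcases hq.eq_one_or_self_of_dvd a h with rfl | haq
    · exact hn (by rwa [mul_one])
    · exact hsq (by rw [haq, sq])
  have ha2 : a ≠ 2 := by
    rintro rfl
    have : q ≤ 2 := hq_def ▸ Nat.minFac_le_of_dvd le_rfl (dvd_mul_left 2 q)
    exact haq (by rw [le_antisymm this hq.two_le])
  have ha0 : a ≠ 0 := by rintro rfl; exact hn0 (mul_zero q)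
  have ha1 : a ≠ 1 := by rintro rfl; exact haq (one_dvd q)
  exact ⟨ncard_cutSet (by omega), not_preconnected_induce_compl_cutSet hq.one_lt (by omega) haq⟩
end
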